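/- arXiv:1607.04362 — 7 statements merged into one kernel-verified Lean document; each statement's English description precedes it below -/
import Mathlib

section
/- If in a single-parameter mechanism the allocation function x is not monotone nondecreasing, i.e., there exist z₁ < z₂ with x(z₁) > x(z₂), then there is no payment rule p making the mechanism truthful and individually rational for simple value maximizers: any individually rational payment rule admits a type with a profitable deviation. -/
open scoped NNReal

/-- if the allocation rule `x` of a single-parameter mechanism is
not monotone nondecreasing (there are `z₁ < z₂` with `x z₁ > x z₂`), then no
individually rational payment rule makes the mechanism truthful for simple
value maximizers: for every payment rule `p` satisfying individual rationality
under truthful bidding (`p t ≤ t * x t`), some type `t` has a profitable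
deviation `b` — either a strictly larger allocation at an individually rational
payment, or the same allocation at a strictly smaller payment. -/
theorem singleParam_nonmonotone_not_truthful
    (x : ℝ≥0 → ℝ≥0) (z₁ z₂ : ℝ≥0) (hz : z₁ < z₂) (hx : x z₂ < x z₁) :
    ∀ p : ℝ≥0 → ℝ≥0, (∀ t, p t ≤ t * x t) →
      ∃ t b : ℝ≥0,
        (x b > x t ∧ p b ≤ t * x b) ∨ (x b = x t ∧ p b < p t) := by
  intro p hIR
  -- Type `z₂` underbids `z₁`: the larger allocation costs at most `z₁`'s value, hence at most its own.
  refine ⟨z₂, z₁, Or.inl ⟨hx, ?_⟩⟩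
  calc p z₁ ≤ z₁ * x z₁ := hIR z₁
    _ ≤ z₂ * x z₁ := by gcongr
end

section
/- In the welfare-maximizing auction for value maximizers (iterated max: first maximize the highest bidder's value over outcomes, then among those outcomes maximize the second-highest value, and so on), with externality payments, truthful reporting is optimal for every simple value maximizer whenever all transformed values are distinct across bidders and outcomes: no bidder can, by misreporting, obtain an outcome she strictly prefers (higher value at an individually rational price, or equal value at a strictly lower price). -/
open scoped NNReal
open Finset

variable {O : Type*} [Fintype O] [DecidableEq O] {n : ℕ}

/-- The values of bidders in `s` for outcome `o`, sorted in descending order. -/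
noncomputable def sortedValsOn (s : Finset (Fin n)) (b : Fin n → O → ℝ≥0) (o : O) :
    List ℝ≥0 :=
  ((s.val.map (fun i => b i o)).sort (· ≤ ·)).reverse

/-- `o*` is an outcome of the iterated-max welfare mechanism run on the bidders
in `s`: it first maximizes the highest bidder value, then among such outcomes
the second-highest, and so on; equivalently, its descending sorted value vector
is lexicographically maximal. -/
def IsIterMaxOn (s : Finset (Fin n)) (b : Fin n → O → ℝ≥0) (ostar : O) : Prop :=
  ∀ o : O, sortedValsOn s b o = sortedValsOn s b ostar ∨
    List.Lex (· < ·) (sortedValsOn s b o) (sortedValsOn s b ostar)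

/-- No ties: all values are distinct across (bidder, outcome) pairs. -/
def DistinctVals (b : Fin n → O → ℝ≥0) : Prop :=
  ∀ (i j : Fin n) (o₁ o₂ : O), (i, o₁) ≠ (j, o₂) → b i o₁ ≠ b j o₂

/-- Bidder `i`'s externality payment: among the bidders whose value changes when
`i` is removed, the largest value obtained when `i` is absent (`0` if the
outcome is unaffected). Here `g s b` is the outcome the mechanism selects for
the bidders in `s` under profile `b`. -/
noncomputable def extPay (g : Finset (Fin n) → (Fin n → O → ℝ≥0) → O)
    (b : Fin n → O → ℝ≥0) (i : Fin n) : ℝ≥0 :=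
  ((univ.erase i).filter
      (fun j => b j (g (univ.erase i) b) ≠ b j (g univ b))).sup
    (fun j => b j (g (univ.erase i) b))

/-!
Under distinct values an iterated-max outcome is already pinned down by its first round: it is
the unique outcome maximizing the top value. Let `o` be the outcome bidder `i` obtains by
misreporting, `oₜ` the truthful one and `o'` the outcome without `i`. If `v i o = v i oₜ`, then
`o = oₜ`; the outcome without `i` does not depend on `i`'s report, so the payment is unchanged.
If `v i o > v i oₜ`, then, since `o` does not beat `oₜ` in the first round, some other bidder
values `oₜ` at least `v i o`, and hence the top value `M` among the others at `o'` strictly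
exceeds `v i o`. Were `o' = o`, the others would value `oₜ` at least `M` as well, forcing
`oₜ = o' = o`; so `o' ≠ o`, the top bidder at `o'` is affected, and `i` pays `M > v i o`.
-/

lemma List.Lex.head_le {β : Type*} [Preorder β] {x y : β} {l₁ l₂ : List β}
    (h : List.Lex (· < ·) (x :: l₁) (y :: l₂)) : x ≤ y := by
  cases h with
  | cons _ => exact le_rfl
  | rel h => exact h.le

section IterMax

variable {α : Type*} {s : Finset (Fin n)} {b t : Fin n → α → ℝ≥0}

lemma mem_sortedValsOn {o : α} {x : ℝ≥0} : x ∈ sortedValsOn s b o ↔ ∃ j ∈ s, b j o = x := by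
  simp [sortedValsOn, Multiset.mem_sort, Multiset.mem_map]

lemma sortedValsOn_eq_sup_cons (hs : s.Nonempty) (o : α) :
    ∃ l, sortedValsOn s b o = s.sup (b · o) :: l := by
  have hsorted : (sortedValsOn s b o).Pairwise (· ≥ ·) :=
    List.pairwise_reverse.2 (Multiset.pairwise_sort _ _)
  obtain ⟨j, hj, hsup⟩ := s.exists_mem_eq_sup hs (b · o)
  have hmem : s.sup (b · o) ∈ sortedValsOn s b o := mem_sortedValsOn.2 ⟨j, hj, hsup.symm⟩
  match h : sortedValsOn s b o with
  | [] => simp [h] at hmem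
  | a :: l =>
    rw [h] at hsorted hmem
    have ha : a ≤ s.sup (b · o) := by
      obtain ⟨k, hk, rfl⟩ := mem_sortedValsOn.1 (h ▸ List.mem_cons_self)
      exact le_sup (f := (b · o)) hk
    have ha' : s.sup (b · o) ≤ a := by
      rcases List.mem_cons.1 hmem with he | hl
      · exact he.le
      · exact List.rel_of_pairwise_cons hsorted hl
    exact ⟨l, by rw [ha.antisymm ha']⟩

lemma IsIterMaxOn.sup_le_sup {ostar : α} (h : IsIterMaxOn s b ostar) (o : α) :
    s.sup (b · o) ≤ s.sup (b · ostar) := by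
  rcases s.eq_empty_or_nonempty with rfl | hs
  · simp
  obtain ⟨l₁, h₁⟩ := sortedValsOn_eq_sup_cons (b := b) hs o
  obtain ⟨l₂, h₂⟩ := sortedValsOn_eq_sup_cons (b := b) hs ostar
  rcases h o with heq | hlex
  · rw [h₁, h₂] at heq
    exact (List.cons_eq_cons.1 heq).1.le
  · rw [h₁, h₂] at hlex
    exact hlex.head_le

lemma sortedValsOn_congr (h : ∀ j ∈ s, b j = t j) : sortedValsOn s b = sortedValsOn s t := by
  funext o
  unfold sortedValsOn
  congr 2
  exact Multiset.map_congr rfl fun j hj => by rw [h j hj]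

lemma isIterMaxOn_congr (h : ∀ j ∈ s, b j = t j) {o : α} :
    IsIterMaxOn s b o ↔ IsIterMaxOn s t o := by
  simp only [IsIterMaxOn, sortedValsOn_congr h]

lemma DistinctVals.injective (hd : DistinctVals b) (i : Fin n) : Function.Injective (b i) :=
  fun o₁ o₂ h => by_contra fun hne => hd i i o₁ o₂ (by simp [hne]) h

lemma DistinctVals.ne_of_ne {i j : Fin n} (hd : DistinctVals b) (hij : i ≠ j) (o₁ o₂ : α) :
    b i o₁ ≠ b j o₂ :=
  hd i j o₁ o₂ (by simp [hij])

lemma DistinctVals.eq_of_sup_eq (hd : DistinctVals b) (hs : s.Nonempty) {o₁ o₂ : α}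
    (h : s.sup (b · o₁) = s.sup (b · o₂)) : o₁ = o₂ := by
  obtain ⟨j₁, -, h₁⟩ := s.exists_mem_eq_sup hs (b · o₁)
  obtain ⟨j₂, -, h₂⟩ := s.exists_mem_eq_sup hs (b · o₂)
  by_contra hne
  exact hd j₁ j₂ o₁ o₂ (by simp [hne]) (by rw [← h₁, h, h₂])

lemma IsIterMaxOn.unique (hd : DistinctVals b) (hs : s.Nonempty) {o₁ o₂ : α}
    (h₁ : IsIterMaxOn s b o₁) (h₂ : IsIterMaxOn s b o₂) : o₁ = o₂ :=
  hd.eq_of_sup_eq hs ((h₂.sup_le_sup o₁).antisymm (h₁.sup_le_sup o₂))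

end IterMax

section ExtPay

variable {α : Type*} {g : Finset (Fin n) → (Fin n → α → ℝ≥0) → α} {i : Fin n}
  {b t : Fin n → α → ℝ≥0}

lemma extPay_congr (hoff : ∀ j ≠ i, b j = t j) (huniv : g univ b = g univ t)
    (herase : g (univ.erase i) b = g (univ.erase i) t) : extPay g b i = extPay g t i := by
  unfold extPay
  rw [huniv, herase]
  refine sup_congr (filter_congr fun j hj => ?_) fun j hj => ?_
  · rw [hoff j (ne_of_mem_erase hj)]
  · rw [hoff j (ne_of_mem_erase (mem_of_mem_filter j hj))]

lemma le_extPay {j : Fin n} (hji : j ≠ i)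
    (hne : b j (g (univ.erase i) b) ≠ b j (g univ b)) :
    b j (g (univ.erase i) b) ≤ extPay g b i :=
  le_sup (f := fun j => b j (g (univ.erase i) b))
    (mem_filter.2 ⟨mem_erase.2 ⟨hji, mem_univ j⟩, hne⟩)

lemma extPay_eq_of_outcome_eq (hg : ∀ s b, IsIterMaxOn s b (g s b)) (hd : DistinctVals t)
    (hoff : ∀ j ≠ i, b j = t j) (h : g univ b = g univ t) : extPay g b i = extPay g t i := by
  rcases (univ.erase i).eq_empty_or_nonempty with he | hs
  · simp [extPay, he]
  have hoff' : ∀ j ∈ univ.erase i, b j = t j := fun j hj => hoff j (ne_of_mem_erase hj)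
  exact extPay_congr hoff h (((isIterMaxOn_congr hoff').1 (hg _ b)).unique hd hs (hg _ t))

lemma lt_extPay_of_lt_value (hg : ∀ s b, IsIterMaxOn s b (g s b)) (hd : DistinctVals t)
    (hoff : ∀ j ≠ i, b j = t j) (hlt : t i (g univ t) < t i (g univ b)) :
    t i (g univ b) < extPay g b i := by
  set o := g univ b
  set oₜ := g univ t
  set o' := g (univ.erase i) b
  set M : α → ℝ≥0 := fun x => (univ.erase i).sup (t · x)
  have hsplit : ∀ x, univ.sup (t · x) = t i x ⊔ M x := fun x => by
    conv_lhs => rw [← insert_erase (mem_univ i)]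
    exact sup_insert
  have hoff' : ∀ j ∈ univ.erase i, b j = t j := fun j hj => hoff j (ne_of_mem_erase hj)
  have hM : M oₜ ≤ M o' := ((isIterMaxOn_congr hoff').1 (hg _ b)).sup_le_sup oₜ
  have hothers : ∀ x, x ≤ t i o ⊔ M o → t i oₜ < x → x ≤ M oₜ := fun x hx hix =>
    (le_sup_iff.1 (hx.trans (by simpa only [hsplit] using (hg univ t).sup_le_sup o))).resolve_left
      hix.not_ge
  have hiM : t i o ≤ M o' := (hothers _ le_sup_left hlt).trans hM
  obtain ⟨k, hk, -⟩ := Finset.lt_sup_iff.1 (hlt.trans_le hiM)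
  obtain ⟨j, hj, hjM⟩ : ∃ j ∈ univ.erase i, M o' = t j o' :=
    exists_mem_eq_sup _ ⟨k, hk⟩ (t · o')
  have hji : j ≠ i := ne_of_mem_erase hj
  have hiM' : t i o < M o' := hiM.lt_of_ne (hjM ▸ hd.ne_of_ne hji.symm o o')
  have hne : o' ≠ o := by
    intro heq
    have hM' : M o' ≤ M oₜ := hothers _ (heq ▸ le_sup_right) (hlt.trans hiM')
    have hoₜ : oₜ = o' := hd.eq_of_sup_eq ⟨k, hk⟩ (hM.antisymm hM')
    exact hlt.ne (by rw [hoₜ, heq])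
  calc t i o < t j o' := hjM ▸ hiM'
    _ = b j o' := by rw [hoff j hji]
    _ ≤ extPay g b i := le_extPay hji (by rw [hoff j hji]; exact (hd.injective j).ne hne)

end ExtPay

theorem iterMax_welfare_truthful_for_value_maximizers_general
    (g : Finset (Fin n) → (Fin n → O → ℝ≥0) → O)
    (hg : ∀ (s : Finset (Fin n)) (b : Fin n → O → ℝ≥0), IsIterMaxOn s b (g s b))
    (i : Fin n) (v b : Fin n → O → ℝ≥0)
    (htruth_distinct : DistinctVals (Function.update b i (v i))) :
    ¬ ((v i (g univ b) > v i (g univ (Function.update b i (v i))) ∧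
          extPay g b i ≤ v i (g univ b)) ∨
       (v i (g univ b) = v i (g univ (Function.update b i (v i))) ∧
          extPay g b i < extPay g (Function.update b i (v i)) i)) := by
  set t := Function.update b i (v i)
  have hti : t i = v i := Function.update_self i (v i) b
  have hoff : ∀ j ≠ i, b j = t j := fun j hj => (Function.update_of_ne hj _ _).symm
  rw [← hti]
  rintro (⟨hgt, hpay⟩ | ⟨heq, hlt⟩)
  · exact (lt_extPay_of_lt_value hg htruth_distinct hoff hgt).not_ge hpay
  · exact hlt.ne (extPay_eq_of_outcome_eq hg htruth_distinct hoff (htruth_distinct.injective i heq))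

/-- the iterated-max welfare mechanism with externality payments is
truthful for simple value maximizers whenever no ties occur: no bidder can, by
misreporting, obtain an outcome of strictly higher value to her at an
individually rational payment, nor an outcome of equal value at a strictly
lower payment. -/
theorem iterMax_welfare_truthful_for_value_maximizers [Nonempty O]
    (g : Finset (Fin n) → (Fin n → O → ℝ≥0) → O)
    (hg : ∀ (s : Finset (Fin n)) (b : Fin n → O → ℝ≥0), IsIterMaxOn s b (g s b))
    (i : Fin n) (v b : Fin n → O → ℝ≥0)
    (htruth_distinct : DistinctVals (Function.update b i (v i)))
    (hdev_distinct : DistinctVals b) :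
    ¬ ((v i (g univ b) > v i (g univ (Function.update b i (v i))) ∧
          extPay g b i ≤ v i (g univ b)) ∨
       (v i (g univ b) = v i (g univ (Function.update b i (v i))) ∧
          extPay g b i < extPay g (Function.update b i (v i)) i)) :=
  iterMax_welfare_truthful_for_value_maximizers_general g hg i v b htruth_distinct
end

section
/- Robustness theorem: Suppose a mechanism is truthful and individually rational for simple value maximizers and has no positive transfers (all payments ≥ 0). If a bidder has super-quasilinear preferences, an ROI constraint γ > 0 (individual rationality gives p_i ≤ v_i(o)/(γ+1) under truthful play), and her values satisfy the separation condition v_i(o) · γ/(γ+1) ≥ v_i(o') whenever v_i(o) > v_i(o'), then truthful reporting is weakly preferred to every misreport. -/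
/-- robustness theorem: consider a bidder with super-quasilinear
preferences `pref` (where `pref a p c q` means the pair (value `a`, payment `p`)
is weakly preferred to (value `c`, payment `q`)), an ROI constraint `γ > 0`, and
values satisfying the separation condition `v o * γ/(γ+1) ≥ v o'` whenever
`v o > v o'`. If the mechanism is truthful and individually rational for simple
value maximizers and has no positive transfers, then the truthful pair
`(v o, p)` is weakly preferred to every pair `(v o', p')` achievable by a
misreport (the achievable set `D`). -/
theorem super_quasilinear_roi_behaves_like_value_maximizer
    {O : Type*} (v : O → ℝ) (hv : ∀ o, 0 ≤ v o)
    (γ : ℝ) (hγ : 0 < γ)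
    (pref : ℝ → ℝ → ℝ → ℝ → Prop)
    -- super-quasilinearity: higher value with weakly larger surplus is preferred
    (hSQL : ∀ a p c q : ℝ, a > c → a - p ≥ c - q → pref a p c q)
    -- at equal value, a lower payment is preferred
    (hEqVal : ∀ a p q : ℝ, p ≤ q → pref a p a q)
    -- any outcome at a price exceeding its value is worse than (0, 0)
    (hWorseNothing : ∀ c q : ℝ, q > c → pref 0 0 c q)
    (hTrans : ∀ a p c q e r : ℝ, pref a p c q → pref c q e r → pref a p e r)
    -- truthful outcome `o` at payment `p`; `D` is the set of (outcome, payment)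
    -- pairs achievable by misreporting
    (o : O) (p : ℝ) (D : Set (O × ℝ))
    -- individual rationality under the ROI constraint γ
    (hIR : p ≤ v o / (γ + 1))
    (hIR0 : pref (v o) p 0 0)
    -- no positive transfers
    (hNPT : 0 ≤ p ∧ ∀ x ∈ D, 0 ≤ x.2)
    -- truthfulness for simple value maximizers: no achievable pair is strictly
    -- preferred by a value maximizer
    (hVMtruthful : ∀ x ∈ D,
      ¬ ((v x.1 > v o ∧ x.2 ≤ v x.1) ∨ (v x.1 = v o ∧ x.2 < p)))
    -- separation condition on the bidder's values
    (hsep : ∀ o₁ o₂ : O, v o₁ > v o₂ → v o₁ * (γ / (γ + 1)) ≥ v o₂) :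
    ∀ x ∈ D, pref (v o) p (v x.1) x.2 := by
  
  intro x hx
  rcases lt_trichotomy (v x.1) (v o) with hlt | heq | hgt
  · -- strictly lower value: super-quasilinearity
    apply hSQL _ _ _ _ hlt
    have hx2 : 0 ≤ x.2 := hNPT.2 x hx
    have hsep' := hsep o x.1 hlt
    have h1 : v o - p ≥ v o - v o / (γ + 1) := by linarith
    have h2 : v o - v o / (γ + 1) = v o * (γ / (γ + 1)) := by
      field_simp
      ring
    linarith [h2 ▸ h1]
  · rw [heq]
    apply hEqVal
    have := hVMtruthful x hx
    push_neg at this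
    exact (this.2 heq)
  · have := hVMtruthful x hx
    push_neg at this
    have hq : v x.1 < x.2 := this.1 hgt
    exact hTrans _ _ _ _ _ _ hIR0 (hWorseNothing _ _ hq)
end

section
/- In the GSP auction under the separable click model, with bidders sorted so that β₁b₁ ≥ β₂b₂ ≥ ... ≥ β_n b_n and bidder i assigned slot i with per-click price equal to the minimum bid keeping her slot (p_i = β_{i+1} b_{i+1} / β_i for i ≤ m), the allocation α_{j(i)} β_i as a function of bidder i's own bid (holding others fixed) is monotone nondecreasing, and the payment equals the allocation times the infimum bid achieving that allocation; hence by the single-parameter characterization GSP is truthful (almost everywhere) for simple value maximizers. -/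
open MeasureTheory

/-- The rank of our bidder when she bids `b`: the number of opponents whose
fixed score `s j` is at least her score `β * b` (ties counted against her).
She is assigned slot `gspRank + 1`. -/
noncomputable def gspRank {k : ℕ} (s : Fin k → ℝ) (β : ℝ) (b : ℝ) : ℕ :=
  {j : Fin k | β * b ≤ s j}.ncard

/-- Expected-click allocation of our bidder with quality `β` when she bids `b`:
`A r` is the click factor `α_{r+1}` of slot `r + 1` (slots indexed from `0`),
and allocation in slot `r + 1` is `A r * β`; bidders ranked below slot `m` get
nothing. -/
noncomputable def gspAlloc {k : ℕ} (m : ℕ) (s : Fin k → ℝ) (β : ℝ) (A : ℕ → ℝ)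
    (b : ℝ) : ℝ :=
  if gspRank s β b < m then A (gspRank s β b) * β else 0

/-- The highest opponent score strictly below our bidder's score (0 if none):
the numerator of her GSP per-click price (minimum score keeping her slot). -/
noncomputable def gspNextScore {k : ℕ} (s : Fin k → ℝ) (β : ℝ) (b : ℝ) : ℝ :=
  sSup ({0} ∪ {x : ℝ | (∃ j, s j = x) ∧ x < β * b})

/-- Total expected GSP payment: allocation times the per-click price
`gspNextScore / β` (the minimum bid keeping the slot). -/
noncomputable def gspPay {k : ℕ} (m : ℕ) (s : Fin k → ℝ) (β : ℝ) (A : ℕ → ℝ)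
    (b : ℝ) : ℝ :=
  gspAlloc m s β A b * (gspNextScore s β b / β)

/-!
The bidder's rank is the number of opponents scoring at least `β * b`, so it is antitone in `b`
and the allocation is a nondecreasing step function of the bid. If `N` is the highest opponent
score below `β * b` (or `0`), every bid in `(N / β, b]` keeps the same rank while no bid below
`N / β` does, so the GSP price `N / β` is exactly the threshold bid of the current step. A bidder
of type `t` can then only gain by a deviation to a higher step whose threshold equals `t`, which
confines such types to the finite set `{0} ∪ {s j / β}`.
-/

lemma csInf_eq_of_Ioc_subset {S : Set ℝ} {θ b : ℝ} (hb : b ∈ S) (hlow : ∀ z ∈ S, θ ≤ z)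
    (hIoc : Set.Ioc θ b ⊆ S) : sInf S = θ := by
  refine csInf_eq_of_forall_ge_of_forall_gt_exists_lt ⟨b, hb⟩ hlow fun w hw => ?_
  by_cases hbw : b < w
  · exact ⟨b, hb, hbw⟩
  · exact ⟨(θ + w) / 2, hIoc ⟨by linarith, by linarith⟩, by linarith⟩

section GSP

variable {k m : ℕ} {s : Fin k → ℝ} {β : ℝ} {A : ℕ → ℝ} {b z : ℝ}

lemma setOf_mul_le_subset_of_le (hβ : 0 < β) (h : z ≤ b) :
    {j : Fin k | β * b ≤ s j} ⊆ {j : Fin k | β * z ≤ s j} := fun _ hj =>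
  (mul_le_mul_of_nonneg_left h hβ.le).trans hj

lemma gspRank_antitone (hβ : 0 < β) : Antitone (gspRank s β) := fun _ _ h =>
  Set.ncard_le_ncard (setOf_mul_le_subset_of_le hβ h)

lemma gspNextScore_candidates_finite (b : ℝ) :
    (({0} : Set ℝ) ∪ {x : ℝ | (∃ j, s j = x) ∧ x < β * b}).Finite :=
  (Set.finite_singleton 0).union ((Set.finite_range s).subset fun _ hx => hx.1)

lemma gspNextScore_mem (b : ℝ) :
    gspNextScore s β b ∈ ({0} : Set ℝ) ∪ {x : ℝ | (∃ j, s j = x) ∧ x < β * b} :=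
  Set.Nonempty.csSup_mem ⟨0, Or.inl rfl⟩ (gspNextScore_candidates_finite b)

lemma gspNextScore_nonneg (b : ℝ) : 0 ≤ gspNextScore s β b :=
  le_csSup (gspNextScore_candidates_finite b).bddAbove (Or.inl rfl)

lemma le_gspNextScore {j : Fin k} (h : s j < β * b) : s j ≤ gspNextScore s β b :=
  le_csSup (gspNextScore_candidates_finite b).bddAbove (Or.inr ⟨⟨j, rfl⟩, h⟩)

lemma gspRank_eq_of_gspNextScore_lt (hβ : 0 < β) (hN : gspNextScore s β b < β * z)
    (hz : z ≤ b) : gspRank s β z = gspRank s β b := by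
  refine congrArg Set.ncard (Set.Subset.antisymm (fun j hj => ?_)
    (setOf_mul_le_subset_of_le hβ hz))
  by_contra hjb
  have hjN := le_gspNextScore (not_le.mp hjb)
  have hzj : β * z ≤ s j := hj
  linarith

lemma gspNextScore_le_of_gspRank_eq (hβ : 0 < β) (hz : 0 ≤ z)
    (h : gspRank s β z = gspRank s β b) : gspNextScore s β b ≤ β * z := by
  rcases gspNextScore_mem (s := s) (β := β) b with hN | ⟨⟨j, hj⟩, hjb⟩
  · rw [Set.mem_singleton_iff.mp hN]
    positivity
  · by_contra! hzj
    rw [← hj] at hzj hjb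
    have hzb : z ≤ b := le_of_mul_le_mul_left (hzj.trans hjb).le hβ
    have hsub : {j : Fin k | β * b ≤ s j} ⊂ {j : Fin k | β * z ≤ s j} :=
      (Set.ssubset_iff_of_subset (setOf_mul_le_subset_of_le hβ hzb)).mpr
        ⟨j, hzj.le, hjb.not_ge⟩
    exact (Set.ncard_lt_ncard hsub).ne' h

lemma gspAlloc_nonneg (hβ : 0 < β) (hA_pos : ∀ r, r < m → 0 < A r) (b : ℝ) :
    0 ≤ gspAlloc m s β A b := by
  unfold gspAlloc
  split_ifs with h
  exacts [mul_nonneg (hA_pos _ h).le hβ.le, le_rfl]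

lemma gspAlloc_pos_iff (hβ : 0 < β) (hA_pos : ∀ r, r < m → 0 < A r) :
    0 < gspAlloc m s β A b ↔ gspRank s β b < m := by
  unfold gspAlloc
  split_ifs with h
  exacts [iff_of_true (mul_pos (hA_pos _ h) hβ) h, iff_of_false (lt_irrefl 0) h]

lemma gspAlloc_eq_iff (hβ : 0 < β) (hA_strict : ∀ r r', r < r' → r' < m → A r' < A r)
    (hA_pos : ∀ r, r < m → 0 < A r) (hb : gspRank s β b < m) :
    gspAlloc m s β A z = gspAlloc m s β A b ↔ gspRank s β z = gspRank s β b := by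
  refine ⟨fun h => ?_, fun h => by rw [gspAlloc, gspAlloc, h]⟩
  have hz : gspRank s β z < m :=
    (gspAlloc_pos_iff hβ hA_pos).mp (h ▸ (gspAlloc_pos_iff hβ hA_pos).mpr hb)
  rw [gspAlloc, gspAlloc, if_pos hz, if_pos hb] at h
  have hA : A (gspRank s β z) = A (gspRank s β b) := mul_right_cancel₀ hβ.ne' h
  rcases lt_trichotomy (gspRank s β z) (gspRank s β b) with hlt | heq | hgt
  · exact absurd hA (hA_strict _ _ hlt hb).ne'
  · exact heq
  · exact absurd hA (hA_strict _ _ hgt hz).ne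

lemma gspAlloc_monotone (hβ : 0 < β) (hA_strict : ∀ r r', r < r' → r' < m → A r' < A r)
    (hA_pos : ∀ r, r < m → 0 < A r) : Monotone (gspAlloc m s β A) := by
  intro z b hzb
  have hr : gspRank s β b ≤ gspRank s β z := gspRank_antitone hβ hzb
  by_cases hz : gspRank s β z < m
  · rw [gspAlloc, gspAlloc, if_pos hz, if_pos (hr.trans_lt hz)]
    rcases hr.lt_or_eq with hlt | heq
    · exact mul_le_mul_of_nonneg_right (hA_strict _ _ hlt hz).le hβ.le
    · rw [heq]
  · rw [gspAlloc, if_neg hz]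
    exact gspAlloc_nonneg hβ hA_pos b

lemma sInf_gspAlloc_eq (hβ : 0 < β) (hA_strict : ∀ r r', r < r' → r' < m → A r' < A r)
    (hA_pos : ∀ r, r < m → 0 < A r) (hb0 : 0 ≤ b) (hb : gspRank s β b < m) :
    sInf {z : ℝ | 0 ≤ z ∧ gspAlloc m s β A z = gspAlloc m s β A b} =
      gspNextScore s β b / β := by
  simp_rw [gspAlloc_eq_iff hβ hA_strict hA_pos hb]
  refine csInf_eq_of_Ioc_subset ⟨hb0, rfl⟩ (fun z ⟨hz, h⟩ => ?_) fun z ⟨hNz, hzb⟩ => ⟨?_, ?_⟩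
  · rw [div_le_iff₀' hβ]
    exact gspNextScore_le_of_gspRank_eq hβ hz h
  · exact (div_nonneg (gspNextScore_nonneg b) hβ.le).trans hNz.le
  · exact gspRank_eq_of_gspNextScore_lt hβ ((div_lt_iff₀' hβ).mp hNz) hzb

lemma gspPay_eq_gspAlloc_mul_sInf (hβ : 0 < β)
    (hA_strict : ∀ r r', r < r' → r' < m → A r' < A r) (hA_pos : ∀ r, r < m → 0 < A r)
    (hb0 : 0 ≤ b) :
    gspPay m s β A b =
      gspAlloc m s β A b * sInf {z : ℝ | 0 ≤ z ∧ gspAlloc m s β A z = gspAlloc m s β A b} := by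
  by_cases hb : gspRank s β b < m
  · rw [sInf_gspAlloc_eq hβ hA_strict hA_pos hb0 hb, gspPay]
  · rw [gspPay, gspAlloc, if_neg hb, zero_mul, zero_mul]

lemma gspPay_eq_of_gspAlloc_eq (hβ : 0 < β)
    (hA_strict : ∀ r r', r < r' → r' < m → A r' < A r) (hA_pos : ∀ r, r < m → 0 < A r)
    (hb0 : 0 ≤ b) (hz0 : 0 ≤ z) (h : gspAlloc m s β A b = gspAlloc m s β A z) :
    gspPay m s β A b = gspPay m s β A z := by
  rw [gspPay_eq_gspAlloc_mul_sInf hβ hA_strict hA_pos hb0,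
    gspPay_eq_gspAlloc_mul_sInf hβ hA_strict hA_pos hz0, h]

lemma mul_eq_gspNextScore_of_gspAlloc_lt (hβ : 0 < β)
    (hA_strict : ∀ r r', r < r' → r' < m → A r' < A r) (hA_pos : ∀ r, r < m → 0 < A r)
    (hlt : gspAlloc m s β A z < gspAlloc m s β A b)
    (hIR : gspPay m s β A b ≤ z * gspAlloc m s β A b) :
    β * z = gspNextScore s β b := by
  have hpos : 0 < gspAlloc m s β A b := (gspAlloc_nonneg hβ hA_pos z).trans_lt hlt
  have hb : gspRank s β b < m := (gspAlloc_pos_iff hβ hA_pos).mp hpos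
  have hNz : gspNextScore s β b ≤ β * z := by
    rw [gspPay, mul_comm z] at hIR
    rw [← div_le_iff₀' hβ]
    exact le_of_mul_le_mul_left hIR hpos
  refine le_antisymm (not_lt.mp fun hzN => hlt.ne ?_) hNz
  have hzb : z ≤ b := not_lt.mp fun hbz =>
    hlt.not_ge (gspAlloc_monotone hβ hA_strict hA_pos hbz.le)
  exact (gspAlloc_eq_iff hβ hA_strict hA_pos hb).mpr
    (gspRank_eq_of_gspNextScore_lt hβ hzN hzb)

end GSP

theorem gsp_monotone_threshold_truthful_ae_general
    {k : ℕ} (m : ℕ) (s : Fin k → ℝ) (β : ℝ) (A : ℕ → ℝ)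
    (hβ : 0 < β)
    (hA_strict : ∀ r r', r < r' → r' < m → A r' < A r)
    (hA_pos : ∀ r, r < m → 0 < A r) :
    Monotone (gspAlloc m s β A) ∧
    (∀ b : ℝ, 0 ≤ b →
      gspPay m s β A b =
        gspAlloc m s β A b *
          sInf {z : ℝ | 0 ≤ z ∧ gspAlloc m s β A z = gspAlloc m s β A b}) ∧
    volume {t : ℝ | 0 ≤ t ∧ ∃ b, 0 ≤ b ∧
        ((gspAlloc m s β A b > gspAlloc m s β A t ∧
            gspPay m s β A b ≤ t * gspAlloc m s β A b) ∨
         (gspAlloc m s β A b = gspAlloc m s β A t ∧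
            gspPay m s β A b < gspPay m s β A t))} = 0 := by
  refine ⟨gspAlloc_monotone hβ hA_strict hA_pos,
    fun b hb0 => gspPay_eq_gspAlloc_mul_sInf hβ hA_strict hA_pos hb0, ?_⟩
  refine measure_mono_null (t := (· / β) '' ({0} ∪ Set.range s)) ?_
    ((((Set.finite_singleton 0).union (Set.finite_range s)).image _).measure_zero _)
  rintro t ⟨ht0, b, hb0, ⟨hlt, hIR⟩ | ⟨heq, hlt⟩⟩
  · refine ⟨gspNextScore s β b, ?_, ?_⟩
    · exact Set.union_subset_union_right _ (fun _ hx => hx.1) (gspNextScore_mem b)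
    · rw [← mul_eq_gspNextScore_of_gspAlloc_lt hβ hA_strict hA_pos hlt hIR]
      field_simp
  · exact absurd (gspPay_eq_of_gspAlloc_eq hβ hA_strict hA_pos hb0 ht0 heq) hlt.ne

/-- in the separable click model with fixed distinct opponent
scores, (i) the GSP allocation of a bidder is monotone nondecreasing in her own
bid, (ii) her GSP payment equals her allocation times the infimum bid achieving
that allocation, and hence (iii) by the single-parameter characterization GSP is
truthful almost everywhere for simple value maximizers: the set of types with a
profitable deviation (a strictly larger allocation at an individually rational
payment, or an equal allocation at a strictly smaller payment) has measure
zero. -/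
theorem gsp_monotone_threshold_truthful_ae
    {k : ℕ} (m : ℕ) (s : Fin k → ℝ) (β : ℝ) (A : ℕ → ℝ)
    (hβ : 0 < β)
    (hs : ∀ j, 0 ≤ s j) (hs_distinct : Function.Injective s)
    (hA_strict : ∀ r r', r < r' → r' < m → A r' < A r)
    (hA_pos : ∀ r, r < m → 0 < A r) :
    Monotone (gspAlloc m s β A) ∧
    (∀ b : ℝ, 0 ≤ b →
      gspPay m s β A b =
        gspAlloc m s β A b *
          sInf {z : ℝ | 0 ≤ z ∧ gspAlloc m s β A z = gspAlloc m s β A b}) ∧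
    volume {t : ℝ | 0 ≤ t ∧ ∃ b, 0 ≤ b ∧
        ((gspAlloc m s β A b > gspAlloc m s β A t ∧
            gspPay m s β A b ≤ t * gspAlloc m s β A b) ∨
         (gspAlloc m s β A b = gspAlloc m s β A t ∧
            gspPay m s β A b < gspPay m s β A t))} = 0 :=
  gsp_monotone_threshold_truthful_ae_general m s β A hβ hA_strict hA_pos
end

section
/- GSP is truthful for value maximizers with ROI constraints: if each bidder i is a value maximizer with true per-click value t_i and ROI constraint γ_i, and bids b_i = t_i/(1+γ_i) (her maximum willingness to pay per click), then in the GSP auction no bidder can deviate to a different bid and obtain an outcome she prefers (more clicks at a per-click price ≤ t_i/(1+γ_i), or the same slot at a strictly lower price), except on a measure-zero set of type profiles where ties occur. -/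
open MeasureTheory

/-- Rank of bidder `i` in the GSP auction under bid profile `b`: the number of
other bidders whose score `β j * b j` is at least hers (ties against her). -/
noncomputable def gspRankM {n : ℕ} (β : Fin n → ℝ) (b : Fin n → ℝ) (i : Fin n) : ℕ :=
  {j : Fin n | j ≠ i ∧ β i * b i ≤ β j * b j}.ncard

/-- Expected-click allocation of bidder `i` (slot click factors `A 0 > A 1 > …`,
only the top `m` slots exist). -/
noncomputable def gspAllocM {n : ℕ} (m : ℕ) (β : Fin n → ℝ) (A : ℕ → ℝ)
    (b : Fin n → ℝ) (i : Fin n) : ℝ :=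
  if gspRankM β b i < m then A (gspRankM β b i) * β i else 0

/-- Highest competing score strictly below bidder `i`'s score (0 if none). -/
noncomputable def gspNextScoreM {n : ℕ} (β : Fin n → ℝ) (b : Fin n → ℝ)
    (i : Fin n) : ℝ :=
  sSup ({0} ∪ {x : ℝ | (∃ j, j ≠ i ∧ β j * b j = x) ∧ x < β i * b i})

/-- Total expected GSP payment of bidder `i`: allocation times the per-click
price `gspNextScoreM / β i` (minimum bid keeping the slot). -/
noncomputable def gspPayM {n : ℕ} (m : ℕ) (β : Fin n → ℝ) (A : ℕ → ℝ)
    (b : Fin n → ℝ) (i : Fin n) : ℝ :=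
  gspAllocM m β A b i * (gspNextScoreM β b i / β i)

lemma gsp_key {n : ℕ} (m : ℕ) (β : Fin n → ℝ) (A : ℕ → ℝ)
    (hβ : ∀ i, 0 < β i)
    (hA_strict : ∀ r r', r < r' → r' < m → A r' < A r)
    (hA_pos : ∀ r, r < m → 0 < A r)
    (b : Fin n → ℝ) (i : Fin n) (hbi : 0 ≤ b i) (b' : ℝ)
    (htie : ∀ j, j ≠ i → β j * b j ≠ β i * b i) :
    ¬ ((gspAllocM m β A (Function.update b i b') i > gspAllocM m β A b i ∧
        gspPayM m β A (Function.update b i b') i ≤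
          gspAllocM m β A (Function.update b i b') i * b i) ∨
       (gspAllocM m β A (Function.update b i b') i = gspAllocM m β A b i ∧
        gspPayM m β A (Function.update b i b') i < gspPayM m β A b i)) := by
  have hβi := hβ i
  -- rewrite the rank under deviation
  have hrank' : gspRankM β (Function.update b i b') i
      = {j : Fin n | j ≠ i ∧ β i * b' ≤ β j * b j}.ncard := by
    unfold gspRankM
    congr 1
    ext j
    by_cases hj : j = i
    · simp [hj]
    · simp only [Set.mem_setOf_eq, hj, ne_eq, not_false_iff, true_and,
        Function.update_self, Function.update_of_ne hj]
  have hnext' : gspNextScoreM β (Function.update b i b') i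
      = sSup ({0} ∪ {y : ℝ | (∃ j, j ≠ i ∧ β j * b j = y) ∧ y < β i * b'}) := by
    unfold gspNextScoreM
    congr 2
    ext y
    simp only [Set.mem_setOf_eq, Function.update_self]
    constructor
    · rintro ⟨⟨j, hj, hy⟩, hlt⟩
      exact ⟨⟨j, hj, by rwa [Function.update_of_ne hj] at hy⟩, hlt⟩
    · rintro ⟨⟨j, hj, hy⟩, hlt⟩
      exact ⟨⟨j, hj, by rwa [Function.update_of_ne hj]⟩, hlt⟩
  have hfin : ∀ z : ℝ,
      (({0} ∪ {y : ℝ | (∃ j, j ≠ i ∧ β j * b j = y) ∧ y < z}) : Set ℝ).Finite := by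
    intro z
    apply Set.Finite.subset ((Set.finite_range (fun j => β j * b j)).insert 0)
    rintro y (hy | ⟨⟨j, _, rfl⟩, _⟩)
    · exact Set.mem_insert_iff.mpr (Or.inl hy)
    · exact Set.mem_insert_of_mem _ ⟨j, rfl⟩
  have halloc_nonneg : 0 ≤ gspAllocM m β A b i := by
    unfold gspAllocM
    split
    · exact le_of_lt (mul_pos (hA_pos _ (by assumption)) hβi)
    · exact le_refl 0
  rintro (⟨hgt, hpay⟩ | ⟨heq, hlt⟩)
  · -- case 1: more clicks
    have hr'm : gspRankM β (Function.update b i b') i < m := by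
      by_contra h
      have : gspAllocM m β A (Function.update b i b') i = 0 := by
        unfold gspAllocM; rw [if_neg h]
      rw [this] at hgt; exact absurd hgt (not_lt.mpr halloc_nonneg)
    have halloc'pos : 0 < gspAllocM m β A (Function.update b i b') i :=
      lt_of_le_of_lt halloc_nonneg hgt
    have hr'r : gspRankM β (Function.update b i b') i < gspRankM β b i := by
      by_contra h
      push_neg at h
      have hrm : gspRankM β b i < m := lt_of_le_of_lt h hr'm
      have halloc : gspAllocM m β A b i = A (gspRankM β b i) * β i := by
        unfold gspAllocM; rw [if_pos hrm]
      have halloc' : gspAllocM m β A (Function.update b i b') i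
          = A (gspRankM β (Function.update b i b') i) * β i := by
        unfold gspAllocM; rw [if_pos hr'm]
      rcases eq_or_lt_of_le h with h | h
      · rw [halloc, halloc', h] at hgt; exact lt_irrefl _ hgt
      · have := hA_strict _ _ h hr'm
        have : A (gspRankM β (Function.update b i b') i) * β i
            < A (gspRankM β b i) * β i := by
          exact mul_lt_mul_of_pos_right this hβi
        rw [halloc, halloc'] at hgt; linarith
    -- get a competitor j with β i * b i ≤ β j * b j < β i * b'
    have hnotsub : ¬ ({j : Fin n | j ≠ i ∧ β i * b i ≤ β j * b j}
        ⊆ {j : Fin n | j ≠ i ∧ β i * b' ≤ β j * b j}) := by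
      intro hsub
      have := Set.ncard_le_ncard hsub (Set.toFinite _)
      rw [← hrank'] at this
      exact absurd this (not_le.mpr hr'r)
    obtain ⟨j, hjmem, hjnot⟩ := Set.not_subset.mp hnotsub
    obtain ⟨hji, hjge⟩ := hjmem
    have hjlt : β j * b j < β i * b' := by
      by_contra h
      exact hjnot ⟨hji, not_lt.mp h⟩
    have hjstrict : β i * b i < β j * b j :=
      lt_of_le_of_ne hjge (Ne.symm (htie j hji))
    have hNge : β j * b j ≤ gspNextScoreM β (Function.update b i b') i := by
      rw [hnext']
      exact le_csSup (hfin _).bddAbove (Or.inr ⟨⟨j, hji, rfl⟩, hjlt⟩)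
    have hbi_eq : b i = (β i * b i) / β i := by field_simp
    have hstep : gspAllocM m β A (Function.update b i b') i * b i
        < gspPayM m β A (Function.update b i b') i := by
      unfold gspPayM
      apply mul_lt_mul_of_pos_left _ halloc'pos
      rw [hbi_eq]
      exact (div_lt_div_iff_of_pos_right hβi).mpr (lt_of_lt_of_le hjstrict hNge)
    linarith
  · -- case 2: same clicks, lower payment
    by_cases hrm : gspRankM β b i < m
    · have halloc : gspAllocM m β A b i = A (gspRankM β b i) * β i := by
        unfold gspAllocM; rw [if_pos hrm]
      have hallocpos : 0 < gspAllocM m β A b i := by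
        rw [halloc]; exact mul_pos (hA_pos _ hrm) hβi
      have hr'm : gspRankM β (Function.update b i b') i < m := by
        by_contra h
        have : gspAllocM m β A (Function.update b i b') i = 0 := by
          unfold gspAllocM; rw [if_neg h]
        rw [this] at heq; linarith
      have halloc' : gspAllocM m β A (Function.update b i b') i
          = A (gspRankM β (Function.update b i b') i) * β i := by
        unfold gspAllocM; rw [if_pos hr'm]
      have hAr : A (gspRankM β (Function.update b i b') i) = A (gspRankM β b i) := by
        have := heq
        rw [halloc, halloc'] at this
        exact mul_right_cancel₀ (ne_of_gt hβi) this
      have hrr : gspRankM β (Function.update b i b') i = gspRankM β b i := by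
        rcases lt_trichotomy (gspRankM β (Function.update b i b') i) (gspRankM β b i) with h | h | h
        · exact absurd (hA_strict _ _ h hrm) (by rw [hAr]; exact lt_irrefl _)
        · exact h
        · exact absurd (hA_strict _ _ h hr'm) (by rw [hAr]; exact lt_irrefl _)
      -- show the sets of beaten-by competitors coincide
      have hSeq : {j : Fin n | j ≠ i ∧ β i * b' ≤ β j * b j}
          = {j : Fin n | j ≠ i ∧ β i * b i ≤ β j * b j} := by
        have hcard : ({j : Fin n | j ≠ i ∧ β i * b' ≤ β j * b j}).ncard
            = ({j : Fin n | j ≠ i ∧ β i * b i ≤ β j * b j}).ncard := by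
          rw [← hrank']; exact hrr
        rcases le_total (β i * b') (β i * b i) with h | h
        · have hsub : {j : Fin n | j ≠ i ∧ β i * b i ≤ β j * b j}
              ⊆ {j : Fin n | j ≠ i ∧ β i * b' ≤ β j * b j} :=
            fun j ⟨hj, hle⟩ => ⟨hj, le_trans h hle⟩
          exact (Set.eq_of_subset_of_ncard_le hsub (le_of_eq hcard)
            (Set.toFinite _)).symm
        · have hsub : {j : Fin n | j ≠ i ∧ β i * b' ≤ β j * b j}
              ⊆ {j : Fin n | j ≠ i ∧ β i * b i ≤ β j * b j} :=
            fun j ⟨hj, hle⟩ => ⟨hj, le_trans h hle⟩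
          exact Set.eq_of_subset_of_ncard_le hsub (le_of_eq hcard.symm) (Set.toFinite _)
      have hNeq : gspNextScoreM β (Function.update b i b') i = gspNextScoreM β b i := by
        rw [hnext']
        unfold gspNextScoreM
        congr 2
        ext y
        simp only [Set.mem_setOf_eq]
        constructor
        · rintro ⟨⟨j, hj, rfl⟩, hlt⟩
          refine ⟨⟨j, hj, rfl⟩, ?_⟩
          by_contra h
          push_neg at h
          have : j ∈ {j : Fin n | j ≠ i ∧ β i * b i ≤ β j * b j} := ⟨hj, h⟩
          rw [← hSeq] at this
          exact absurd hlt (not_lt.mpr this.2)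
        · rintro ⟨⟨j, hj, rfl⟩, hlt⟩
          refine ⟨⟨j, hj, rfl⟩, ?_⟩
          by_contra h
          push_neg at h
          have : j ∈ {j : Fin n | j ≠ i ∧ β i * b' ≤ β j * b j} := ⟨hj, h⟩
          rw [hSeq] at this
          exact absurd hlt (not_lt.mpr this.2)
      have : gspPayM m β A (Function.update b i b') i = gspPayM m β A b i := by
        unfold gspPayM
        rw [heq, hNeq]
      linarith
    · have halloc0 : gspAllocM m β A b i = 0 := by
        unfold gspAllocM; rw [if_neg hrm]
      have hpay0 : gspPayM m β A b i = 0 := by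
        unfold gspPayM; rw [halloc0, zero_mul]
      have hpay'0 : gspPayM m β A (Function.update b i b') i = 0 := by
        unfold gspPayM; rw [heq, halloc0, zero_mul]
      rw [hpay0, hpay'0] at hlt
      exact lt_irrefl _ hlt

/-- GSP is truthful for value maximizers with ROI constraints.
If each bidder `i` is a value maximizer with true per-click value `t i` and ROI
constraint `γ i`, and bids her maximum willingness to pay `t i / (1 + γ i)`,
then — except on a measure-zero set of type profiles (where ties occur) — no
bidder can deviate to another bid and obtain an outcome she prefers: more
clicks at a per-click price at most `t i / (1 + γ i)`, or the same click volume
at a strictly lower payment. -/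
theorem gsp_truthful_for_roi_value_maximizers_ae
    {n : ℕ} (m : ℕ) (β : Fin n → ℝ) (A : ℕ → ℝ) (γ : Fin n → ℝ)
    (hβ : ∀ i, 0 < β i) (hγ : ∀ i, 0 < γ i)
    (hA_strict : ∀ r r', r < r' → r' < m → A r' < A r)
    (hA_pos : ∀ r, r < m → 0 < A r) :
    volume {t : Fin n → ℝ | (∀ i, 0 ≤ t i) ∧
        ∃ (i : Fin n) (b' : ℝ), 0 ≤ b' ∧
          ((gspAllocM m β A (Function.update (fun j => t j / (1 + γ j)) i b') i >
              gspAllocM m β A (fun j => t j / (1 + γ j)) i ∧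
            gspPayM m β A (Function.update (fun j => t j / (1 + γ j)) i b') i ≤
              gspAllocM m β A (Function.update (fun j => t j / (1 + γ j)) i b') i *
                (t i / (1 + γ i))) ∨
           (gspAllocM m β A (Function.update (fun j => t j / (1 + γ j)) i b') i =
              gspAllocM m β A (fun j => t j / (1 + γ j)) i ∧
            gspPayM m β A (Function.update (fun j => t j / (1 + γ j)) i b') i <
              gspPayM m β A (fun j => t j / (1 + γ j)) i))} = 0 := by
  have hγ1 : ∀ j, (0:ℝ) < 1 + γ j := fun j => by linarith [hγ j]
  set c : Fin n → ℝ := fun j => β j / (1 + γ j) with hc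
  have hcpos : ∀ j, 0 < c j := fun j => div_pos (hβ j) (hγ1 j)
  have hconv : ∀ (t : Fin n → ℝ) (j : Fin n), β j * (t j / (1 + γ j)) = c j * t j := by
    intro t j
    rw [hc]
    field_simp
  have hnull : volume (⋃ (j : Fin n), ⋃ (k : Fin n),
      {t : Fin n → ℝ | j ≠ k ∧ c j * t j = c k * t k}) = 0 := by
    apply measure_iUnion_null
    intro j
    apply measure_iUnion_null
    intro k
    by_cases hjk : j = k
    · have : {t : Fin n → ℝ | j ≠ k ∧ c j * t j = c k * t k} = ∅ := by
        ext t; simp [hjk]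
      rw [this]
      exact measure_empty
    · set L : (Fin n → ℝ) →ₗ[ℝ] ℝ :=
        c j • LinearMap.proj j - c k • LinearMap.proj k with hL
      have hsub : {t : Fin n → ℝ | j ≠ k ∧ c j * t j = c k * t k}
          ⊆ (LinearMap.ker L : Set (Fin n → ℝ)) := by
        rintro t ⟨-, heq⟩
        simp only [SetLike.mem_coe, LinearMap.mem_ker, hL, LinearMap.sub_apply,
          LinearMap.smul_apply, LinearMap.proj_apply, smul_eq_mul]
        rw [heq]; ring
      apply measure_mono_null hsub
      have hker : LinearMap.ker L ≠ ⊤ := by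
        intro htop
        have hmem : Pi.single j (1:ℝ) ∈ LinearMap.ker L := htop ▸ Submodule.mem_top
        rw [LinearMap.mem_ker, hL] at hmem
        simp only [LinearMap.sub_apply, LinearMap.smul_apply, LinearMap.proj_apply,
          smul_eq_mul, Pi.single_eq_same, Pi.single_eq_of_ne (Ne.symm hjk)] at hmem
        rw [mul_one, mul_zero, sub_zero] at hmem
        exact absurd hmem (ne_of_gt (hcpos j))
      exact Measure.addHaar_submodule volume (LinearMap.ker L) hker
  refine measure_mono_null ?_ hnull
  intro t ht
  obtain ⟨hnn, i, b', hb', hdev⟩ := ht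
  by_contra hT
  simp only [Set.mem_iUnion, Set.mem_setOf_eq, not_exists] at hT
  push_neg at hT
  refine gsp_key m β A hβ hA_strict hA_pos (fun j => t j / (1 + γ j)) i
    (div_nonneg (hnn i) (le_of_lt (hγ1 i))) b' (fun j hj => ?_) hdev
  rw [hconv, hconv]
  exact hT j i hj
end

section
/- α-hybrid preferences are super-quasilinear for every α ≥ 1: if v > v' ≥ 0, 0 ≤ p ≤ v, 0 ≤ p' and v − p ≥ v' − p', then v^α − p^α ≥ v'^α − p'^α. -/
/-! Convexity of `x ↦ x ^ α` on `[0, ∞)` makes its increments over intervals of a fixed length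
grow with the left endpoint. If `p' ≤ p`, then `v' ≤ p' + (v - p)`, and the increment over
`[p', p' + (v - p)]` is at most the one over `[p, v]`. If `p ≤ p'`, the powers compare termwise. -/

theorem ConvexOn.map_add_sub_map_le_map_add_sub_map {𝕜 : Type*} [Field 𝕜] [LinearOrder 𝕜]
    [IsStrictOrderedRing 𝕜] {s : Set 𝕜} {f : 𝕜 → 𝕜} {a b d : 𝕜} (hf : ConvexOn 𝕜 s f)
    (hb : b ∈ s) (had : a + d ∈ s) (hab : b ≤ a) (hd : 0 ≤ d) :
    f (b + d) - f b ≤ f (a + d) - f a := by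
  rcases (show 0 ≤ a + d - b by linarith).eq_or_lt with hL | hL
  · obtain ⟨rfl, rfl⟩ : d = 0 ∧ a = b := by constructor <;> linarith
    simp
  -- `b + d` and `a` are convex combinations of `b` and `a + d` with swapped weights
  have hw : (a - b) / (a + d - b) + d / (a + d - b) = 1 := by field_simp; ring
  have hwa : 0 ≤ (a - b) / (a + d - b) := div_nonneg (by linarith) hL.le
  have hwd : 0 ≤ d / (a + d - b) := div_nonneg hd hL.le
  have h₁ := hf.2 hb had hwa hwd hw
  have h₂ := hf.2 hb had hwd hwa (by rw [add_comm, hw])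
  simp only [smul_eq_mul] at h₁ h₂
  rw [show (a - b) / (a + d - b) * b + d / (a + d - b) * (a + d) = b + d by field_simp; ring] at h₁
  rw [show d / (a + d - b) * b + (a - b) / (a + d - b) * (a + d) = a by field_simp; ring] at h₂
  linear_combination h₁ + h₂ + (f b + f (a + d)) * hw

/-- α-hybrid preferences are super-quasilinear for every `α ≥ 1`:
if `v > v' ≥ 0`, `0 ≤ p ≤ v`, `0 ≤ p'`, and the quasilinear surplus comparison
`v - p ≥ v' - p'` holds, then the α-hybrid utilities compare the same way:
`v^α - p^α ≥ v'^α - p'^α`. -/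
theorem hybrid_prefs_super_quasilinear
    (α : ℝ) (hα : 1 ≤ α)
    (v v' p p' : ℝ)
    (hvv' : v > v') (hv' : 0 ≤ v')
    (hp0 : 0 ≤ p) (hpv : p ≤ v)
    (hp' : 0 ≤ p')
    (hsurplus : v - p ≥ v' - p') :
    v' ^ α - p' ^ α ≤ v ^ α - p ^ α := by
  have hα0 : 0 ≤ α := zero_le_one.trans hα
  rcases le_total p' p with hp'p | hpp'
  · calc v' ^ α - p' ^ α ≤ (p' + (v - p)) ^ α - p' ^ α := by
          gcongr
          linarith
      _ ≤ (p + (v - p)) ^ α - p ^ α :=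
          (convexOn_rpow hα).map_add_sub_map_le_map_add_sub_map hp'
            (show (0 : ℝ) ≤ p + (v - p) by linarith) hp'p (by linarith)
      _ = v ^ α - p ^ α := by rw [add_sub_cancel]
  · exact sub_le_sub (Real.rpow_le_rpow hv' hvv'.le hα0) (Real.rpow_le_rpow hp0 hpp' hα0)
end

section
/- Any L^α-affine maximizer is truthful for α-hybrid bidders: the mechanism choosing f(b) = argmax_o [ z(o)^α + ∑_i w_i^α b_i(o)^α ] with weights w_i > 0 and payments p_i defined by p_i^α = (1/w_i^α)( max_o [ z(o)^α + ∑_{j≠i} w_j^α b_j(o)^α ] − z(f(b))^α − ∑_{j≠i} w_j^α b_j(f(b))^α ) is dominant-strategy incentive compatible for bidders with utilities v_i^α − p_i^α, for any 1 ≤ α < ∞. -/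
open Finset

/-- any `L^α`-affine maximizer is truthful for α-hybrid bidders
(`1 ≤ α < ∞`): the mechanism choosing `f b = argmax_o [z(o)^α + ∑ i (w i)^α (b i o)^α]`
with positive weights `w`, together with payments `p` defined by
`(w i)^α (p b i)^α = max_o [z(o)^α + ∑_{j≠i} (w j)^α (b j o)^α]
  - (z(f b)^α + ∑_{j≠i} (w j)^α (b j (f b))^α)`,
is dominant strategy incentive compatible for bidders with utilities
`v^α - p^α`. -/
theorem Lalpha_affine_maximizer_truthful
    {O : Type*} [Fintype O] [Nonempty O] {n : ℕ}
    (α : ℝ) (hα : 1 ≤ α)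
    (w : Fin n → ℝ) (hw : ∀ i, 0 < w i)
    (z : O → ℝ) (hz : ∀ o, 0 ≤ z o)
    (f : (Fin n → O → ℝ) → O)
    (hf : ∀ b : Fin n → O → ℝ, (∀ i o, 0 ≤ b i o) → ∀ o : O,
      z o ^ α + ∑ i, w i ^ α * b i o ^ α ≤
        z (f b) ^ α + ∑ i, w i ^ α * b i (f b) ^ α)
    (p : (Fin n → O → ℝ) → Fin n → ℝ)
    (hp_nonneg : ∀ b i, 0 ≤ p b i)
    (hp : ∀ b : Fin n → O → ℝ, (∀ i o, 0 ≤ b i o) → ∀ i : Fin n,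
      w i ^ α * p b i ^ α =
        (univ.sup' univ_nonempty fun o : O =>
            z o ^ α + ∑ j ∈ univ.erase i, w j ^ α * b j o ^ α) -
          (z (f b) ^ α + ∑ j ∈ univ.erase i, w j ^ α * b j (f b) ^ α)) :
    ∀ (i : Fin n) (v b : Fin n → O → ℝ),
      (∀ j o, 0 ≤ v j o) → (∀ j o, 0 ≤ b j o) →
      v i (f b) ^ α - p b i ^ α ≤
        v i (f (Function.update b i (v i))) ^ α -
          p (Function.update b i (v i)) i ^ α := by
  intro i v b hv hb
  set b' : Fin n → O → ℝ := Function.update b i (v i) with hb'def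
  have hb' : ∀ j o, 0 ≤ b' j o := by
    intro j o
    by_cases h : j = i
    · subst h; simp [hb'def, Function.update_self]; exact hv j o
    · simp [hb'def, Function.update_of_ne h]; exact hb j o
  have hS : ∀ o, ∑ j ∈ univ.erase i, w j ^ α * b' j o ^ α
      = ∑ j ∈ univ.erase i, w j ^ α * b j o ^ α := by
    intro o
    refine Finset.sum_congr rfl fun j hj => ?_
    rw [hb'def, Function.update_of_ne (Finset.ne_of_mem_erase hj)]
  have hwpos : 0 < w i ^ α := Real.rpow_pos_of_pos (hw i) α
  -- split full sums
  have hsplit : ∀ (c : Fin n → O → ℝ) (o : O),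
      ∑ j, w j ^ α * c j o ^ α
        = w i ^ α * c i o ^ α + ∑ j ∈ univ.erase i, w j ^ α * c j o ^ α := by
    intro c o
    rw [← Finset.add_sum_erase _ _ (Finset.mem_univ i)]
  have key := hf b' hb' (f b)
  rw [hsplit b' (f b), hsplit b' (f b'), hS, hS] at key
  have hbi : b' i = v i := by rw [hb'def]; exact Function.update_self i (v i) b
  rw [hbi] at key
  have h1 := hp b hb i
  have h2 := hp b' hb' i
  have hM : (univ.sup' univ_nonempty fun o : O =>
      z o ^ α + ∑ j ∈ univ.erase i, w j ^ α * b' j o ^ α)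
      = (univ.sup' univ_nonempty fun o : O =>
      z o ^ α + ∑ j ∈ univ.erase i, w j ^ α * b j o ^ α) := by
    refine Finset.sup'_congr _ rfl fun o _ => ?_
    rw [hS]
  rw [hM, hS] at h2
  rw [← sub_nonneg]
  nlinarith [key, h1, h2, hwpos]
end
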